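/- arXiv:1512.02518 — 3 statements merged into one kernel-verified Lean document; each statement's English description precedes it below -/
import Mathlib

section
/- Let R be a standard graded algebra over a field of prime characteristic p with irrelevant maximal ideal m, and let I ⊆ R be an m-primary ideal such that the F-threshold c^I(m) exists. Then c(I) − 1 ≤ c^I(m) ≤ c(I). -/
/-- The `q`-th Frobenius power of an ideal: the ideal generated by the `q`-th powers of its
elements. -/
def Ideal.frobPow {R : Type*} [CommRing R] (I : Ideal R) (q : ℕ) : Ideal R :=
  Ideal.span ((fun x => x ^ q) '' (I : Set R))

/-- Zeroth local cohomology with support in `J`: the submodule of elements annihilated by some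
power of `J`. -/
noncomputable def H0 {R : Type*} [CommRing R] (J : Ideal R)
    (M : Type*) [AddCommGroup M] [Module R M] : Submodule R M :=
  ⨆ k : ℕ, Submodule.torsionBySet R M ((J ^ k : Ideal R) : Set R)

/-- The length of a module, as the Krull dimension of its lattice of submodules. -/
noncomputable def modLength (R M : Type*) [CommRing R] [AddCommGroup M] [Module R M] :
    WithBot (WithTop ℕ) :=
  Order.krullDim (Submodule R M)

/-- ℕ-valued module length (with junk value `0` when the length is not finite). -/
noncomputable def modLengthNat (R M : Type*) [CommRing R] [AddCommGroup M] [Module R M] : ℕ :=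
  WithTop.untopD 0 (WithBot.unbotD 0 (modLength R M))

/-- Standard graded: the degree-zero piece is the base field and the algebra is generated in
degree one. -/
def IsStandardGraded {K R : Type*} [Field K] [CommRing R] [Algebra K R]
    (𝒜 : ℕ → Submodule K R) [GradedAlgebra 𝒜] : Prop :=
  𝒜 0 = (1 : Submodule K R) ∧ ∀ n : ℕ, 𝒜 (n + 1) = 𝒜 1 * 𝒜 n

/-!
Since `I` is `m`-primary, `R/I^[q]` is killed by a power of `m`, so `H⁰_m(R/I^[q]) = R/I^[q]`
and `m^{bq}` kills it iff `m^{bq} ⊆ I^[q]`, i.e. iff `ν(q) < bq`. Hence `c(I)` is the least `b`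
with `ν(q)/q < b` for all large `q`, while `ν(q)/q ≥ c(I) - 1` for infinitely many `q`; passing
to the limit gives both inequalities. Finiteness of `c(I)` comes from a bound
`m^{Nq} ⊆ I^[q]` linear in `q`, obtained by pigeonhole on a finite generating set of `m`.
-/

open Filter Topology

namespace Ideal

section FrobeniusPower

variable {R : Type*} [CommRing R] {I J : Ideal R}

theorem pow_mem_frobPow {x : R} (hx : x ∈ I) (q : ℕ) : x ^ q ∈ I.frobPow q :=
  subset_span ⟨x, hx, rfl⟩

theorem frobPow_mono (h : I ≤ J) (q : ℕ) : I.frobPow q ≤ J.frobPow q :=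
  span_mono (Set.image_mono h)

theorem frobPow_mul_le (I J : Ideal R) (q : ℕ) :
    I.frobPow q * J.frobPow q ≤ (I * J).frobPow q := by
  rw [frobPow, frobPow, span_mul_span', span_le]
  rintro _ ⟨_, ⟨x, hx, rfl⟩, _, ⟨y, hy, rfl⟩, rfl⟩
  simpa only [SetLike.mem_coe, mul_pow] using pow_mem_frobPow (mul_mem_mul hx hy) q

theorem frobPow_pow_le (I : Ideal R) (q : ℕ) : ∀ k : ℕ, I.frobPow q ^ k ≤ (I ^ k).frobPow q
  | 0 => by
    rw [pow_zero, pow_zero, one_eq_top, top_le_iff, eq_top_iff_one, ← one_pow q]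
    exact pow_mem_frobPow Submodule.mem_top q
  | k + 1 => by
    rw [pow_succ, pow_succ]
    exact (mul_mono_left (frobPow_pow_le I q k)).trans (frobPow_mul_le _ _ q)

theorem FG.exists_pow_mul_le_frobPow (hJ : J.FG) :
    ∃ N : ℕ, ∀ q : ℕ, J ^ (N * q) ≤ J.frobPow q := by
  induction J, hJ using Submodule.fg_induction with
  | singleton x =>
    refine ⟨1, fun q => ?_⟩
    rw [one_mul, submodule_span_eq, span_singleton_pow, span_le, Set.singleton_subset_iff]
    exact pow_mem_frobPow (mem_span_singleton_self x) q
  | sup J₁ J₂ _ _ h₁ h₂ =>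
    obtain ⟨N₁, hN₁⟩ := h₁
    obtain ⟨N₂, hN₂⟩ := h₂
    refine ⟨N₁ + N₂, fun q => ?_⟩
    rw [add_mul]
    exact sup_pow_add_le_pow_sup_pow.trans <| sup_le
      ((hN₁ q).trans (frobPow_mono le_sup_left q)) ((hN₂ q).trans (frobPow_mono le_sup_right q))

theorem exists_radical_pow_mul_le_frobPow [IsNoetherianRing R] (I : Ideal R) :
    ∃ N : ℕ, ∀ q : ℕ, I.radical ^ (N * q) ≤ I.frobPow q := by
  obtain ⟨k, hk⟩ := I.exists_radical_pow_le_of_fg (IsNoetherian.noetherian _)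
  obtain ⟨N, hN⟩ := FG.exists_pow_mul_le_frobPow (IsNoetherian.noetherian I.radical)
  refine ⟨N * k, fun q => ?_⟩
  calc I.radical ^ (N * k * q) = (I.radical ^ (N * q)) ^ k := by rw [← pow_mul, mul_right_comm]
    _ ≤ I.radical.frobPow q ^ k := pow_right_mono (hN q) k
    _ ≤ (I.radical ^ k).frobPow q := frobPow_pow_le _ q k
    _ ≤ I.frobPow q := frobPow_mono hk q

end FrobeniusPower

section Threshold

variable {R : Type*} [CommSemiring R] {J K : Ideal R} {a : ℕ}

theorem mem_upperBounds_setOf_not_pow_le (h : J ^ a ≤ K) :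
    a ∈ upperBounds {ℓ : ℕ | ¬ J ^ ℓ ≤ K} :=
  fun _ hℓ => le_of_not_ge fun hle => hℓ ((pow_le_pow_right hle).trans h)

theorem sSup_setOf_not_pow_le_le (h : J ^ a ≤ K) : sSup {ℓ : ℕ | ¬ J ^ ℓ ≤ K} ≤ a :=
  csSup_le' (mem_upperBounds_setOf_not_pow_le h)

theorem le_sSup_setOf_not_pow_le {N : ℕ} (hN : J ^ N ≤ K) (h : ¬ J ^ a ≤ K) :
    a ≤ sSup {ℓ : ℕ | ¬ J ^ ℓ ≤ K} :=
  le_csSup ⟨N, mem_upperBounds_setOf_not_pow_le hN⟩ h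

end Threshold

end Ideal

theorem H0_eq_top_of_pow_le_annihilator {R M : Type*} [CommRing R] [AddCommGroup M] [Module R M]
    {J : Ideal R} {k : ℕ} (h : J ^ k ≤ Module.annihilator R M) : H0 J M = ⊤ :=
  eq_top_iff.2 <| le_iSup_of_le k <| eq_top_iff.1 <|
    (Module.isTorsionBySet_iff_torsionBySet_eq_top _).1 <|
      (Module.isTorsionBySet_iff_subset_annihilator R M).2 h

section Limits

variable {α : Type*} {l : Filter α} {u v : α → ℝ} {b c : ℝ}

theorem le_of_tendsto_div_of_eventually_le [l.NeBot] (hv : ∀ n, 0 < v n)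
    (hc : Tendsto (fun n => u n / v n) l (𝓝 c)) (h : ∀ᶠ n in l, u n ≤ b * v n) : c ≤ b :=
  le_of_tendsto hc (h.mono fun n hn => (div_le_iff₀ (hv n)).2 hn)

theorem le_of_tendsto_div_of_frequently_le (hv : ∀ n, 0 < v n)
    (hc : Tendsto (fun n => u n / v n) l (𝓝 c)) (h : ∃ᶠ n in l, b * v n ≤ u n) : b ≤ c :=
  ge_of_tendsto_of_frequently hc (h.mono fun n hn => (le_div_iff₀ (hv n)).2 hn)

theorem sInf_sub_one_le_and_le_sInf_of_tendsto_div [l.NeBot] {B : Set ℕ}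
    (hu : ∀ n, 0 ≤ u n) (hv : ∀ n, 0 < v n) (hc : Tendsto (fun n => u n / v n) l (𝓝 c))
    (hB : B.Nonempty) (hmem : ∀ b ∈ B, ∀ᶠ n in l, u n ≤ b * v n)
    (hnotMem : ∀ a ∉ B, ∃ᶠ n in l, a * v n ≤ u n) :
    ((sInf B : ℕ) : ℝ) - 1 ≤ c ∧ c ≤ (sInf B : ℕ) := by
  refine ⟨?_, le_of_tendsto_div_of_eventually_le hv hc (hmem _ (Nat.sInf_mem hB))⟩
  obtain h0 | hpos := Nat.eq_zero_or_pos (sInf B)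
  · have hc0 : 0 ≤ c := ge_of_tendsto' hc fun n => div_nonneg (hu n) (hv n).le
    rw [h0, Nat.cast_zero]
    linarith
  · have hlt : sInf B - 1 < sInf B := Nat.sub_lt hpos one_pos
    have := le_of_tendsto_div_of_frequently_le hv hc (hnotMem _ (Nat.notMem_of_lt_sInf hlt))
    rwa [Nat.cast_sub hpos, Nat.cast_one] at this

end Limits

open Filter in
theorem fthreshold_between_c_sub_one_and_c_general
    {K R : Type*} [Field K] [CommRing R] [Algebra K R] [IsNoetherianRing R]
    (p : ℕ) [Fact p.Prime]
    (𝒜 : ℕ → Submodule K R) [GradedAlgebra 𝒜]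
    (I : Ideal R)
    (hIm : I.radical = (HomogeneousIdeal.irrelevant 𝒜).toIdeal)
    (c : ℝ)
    (hc : Tendsto (fun n : ℕ =>
      ((sSup {ℓ : ℕ | ¬ (HomogeneousIdeal.irrelevant 𝒜).toIdeal ^ ℓ ≤ I.frobPow (p ^ n)} : ℕ) : ℝ)
        / (p : ℝ) ^ n) atTop (nhds c)) :
    ((sInf {b : ℕ | ∀ᶠ n : ℕ in atTop,
        ((HomogeneousIdeal.irrelevant 𝒜).toIdeal ^ (b * p ^ n)) •
          H0 ((HomogeneousIdeal.irrelevant 𝒜).toIdeal) (R ⧸ I.frobPow (p ^ n)) = ⊥} : ℕ) : ℝ)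
        - 1 ≤ c ∧
    c ≤ (sInf {b : ℕ | ∀ᶠ n : ℕ in atTop,
        ((HomogeneousIdeal.irrelevant 𝒜).toIdeal ^ (b * p ^ n)) •
          H0 ((HomogeneousIdeal.irrelevant 𝒜).toIdeal) (R ⧸ I.frobPow (p ^ n)) = ⊥} : ℕ) := by
  set m := (HomogeneousIdeal.irrelevant 𝒜).toIdeal
  obtain ⟨N, hN⟩ := I.exists_radical_pow_mul_le_frobPow
  rw [hIm] at hN
  have hsmul (b n : ℕ) : m ^ (b * p ^ n) • H0 m (R ⧸ I.frobPow (p ^ n)) = ⊥ ↔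
      m ^ (b * p ^ n) ≤ I.frobPow (p ^ n) := by
    have hann := Ideal.annihilator_quotient (I := I.frobPow (p ^ n))
    rw [H0_eq_top_of_pow_le_annihilator (hann ▸ hN (p ^ n)), ← Submodule.le_annihilator_iff,
      Submodule.annihilator_top, hann]
  have hq (n : ℕ) : (0 : ℝ) < (p : ℝ) ^ n := pow_pos (Nat.cast_pos.2 (Fact.out : p.Prime).pos) n
  refine sInf_sub_one_le_and_le_sInf_of_tendsto_div (fun _ => Nat.cast_nonneg _) hq hc
    ⟨N, ?_⟩ (fun b hb => ?_) (fun a ha => ?_)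
  · exact Eventually.of_forall fun n => (hsmul N n).2 (hN _)
  · filter_upwards [hb] with n hn
    exact_mod_cast Ideal.sSup_setOf_not_pow_le_le ((hsmul b n).1 hn)
  · refine (not_eventually.1 ha).mono fun n hn => ?_
    exact_mod_cast Ideal.le_sSup_setOf_not_pow_le (hN (p ^ n)) (mt (hsmul a n).2 hn)

open Filter in
/-- Observation 8.1: for an `m`-primary ideal `I` of a standard graded algebra over a field of
prime characteristic such that the F-threshold `c^I(m)` exists, one has
`c(I) − 1 ≤ c^I(m) ≤ c(I)`, where `ν(q) = max{ℓ : m^ℓ ⊄ I^[q]}`, `c^I(m) = lim ν(q)/q` and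
`c(I) = inf{b : m^{bq}·H⁰_m(R/I^[q]) = 0 for all q ≫ 0}`. -/
theorem fthreshold_between_c_sub_one_and_c
    {K R : Type*} [Field K] [CommRing R] [Algebra K R] [IsNoetherianRing R]
    (p : ℕ) [Fact p.Prime] [CharP K p]
    (𝒜 : ℕ → Submodule K R) [GradedAlgebra 𝒜]
    (hstd : IsStandardGraded 𝒜)
    (I : Ideal R)
    (hIm : I.radical = (HomogeneousIdeal.irrelevant 𝒜).toIdeal)
    (c : ℝ)
    (hc : Tendsto (fun n : ℕ =>
      ((sSup {ℓ : ℕ | ¬ (HomogeneousIdeal.irrelevant 𝒜).toIdeal ^ ℓ ≤ I.frobPow (p ^ n)} : ℕ) : ℝ)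
        / (p : ℝ) ^ n) atTop (nhds c)) :
    ((sInf {b : ℕ | ∀ᶠ n : ℕ in atTop,
        ((HomogeneousIdeal.irrelevant 𝒜).toIdeal ^ (b * p ^ n)) •
          H0 ((HomogeneousIdeal.irrelevant 𝒜).toIdeal) (R ⧸ I.frobPow (p ^ n)) = ⊥} : ℕ) : ℝ)
        - 1 ≤ c ∧
    c ≤ (sInf {b : ℕ | ∀ᶠ n : ℕ in atTop,
        ((HomogeneousIdeal.irrelevant 𝒜).toIdeal ^ (b * p ^ n)) •
          H0 ((HomogeneousIdeal.irrelevant 𝒜).toIdeal) (R ⧸ I.frobPow (p ^ n)) = ⊥} : ℕ) :=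
  fthreshold_between_c_sub_one_and_c_general p 𝒜 I hIm c hc
end

section
/- Let R be a standard graded ring over a field of prime characteristic p and let M be a finitely generated graded R-module. If end(H⁰_m(Fⁿ(M))) ≤ aq + c for all q = pⁿ, for some constants a and c not depending on q, then M satisfies the (LC) property: there exists b ∈ ℕ₀, independent of q, such that m^{bq}·H⁰_m(Fⁿ(M)) = 0 for all q. -/
/-- `R` viewed as an `R`-algebra via the ring endomorphism `φ` (e.g. a power of the Frobenius). -/
def FrobAlg (R : Type*) [CommRing R] (_φ : R →+* R) : Type _ := R

instance FrobAlg.commRing (R : Type*) [CommRing R] (φ : R →+* R) : CommRing (FrobAlg R φ) :=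
  inferInstanceAs (CommRing R)

instance FrobAlg.algebra (R : Type*) [CommRing R] (φ : R →+* R) : Algebra R (FrobAlg R φ) :=
  (show R →+* FrobAlg R φ from φ).toAlgebra

/-- The identity map of `R`, viewed as landing in `FrobAlg R φ`. -/
def FrobAlg.of (R : Type*) [CommRing R] (φ : R →+* R) : R → FrobAlg R φ := id

/-- The Peskine–Szpiro (Frobenius) functor `Fⁿ(M) = Fⁿ(R) ⊗_R M`, realized as base change
of `M` along `φ` (for `φ` the `n`-th iterate of the Frobenius). -/
def FrobMod (R : Type*) [CommRing R] (φ : R →+* R)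
    (M : Type*) [AddCommGroup M] [Module R M] : Type _ :=
  TensorProduct R (FrobAlg R φ) M

noncomputable instance FrobMod.addCommGroup (R : Type*) [CommRing R] (φ : R →+* R)
    (M : Type*) [AddCommGroup M] [Module R M] : AddCommGroup (FrobMod R φ M) :=
  inferInstanceAs (AddCommGroup (TensorProduct R (FrobAlg R φ) M))

noncomputable instance FrobMod.module (R : Type*) [CommRing R] (φ : R →+* R)
    (M : Type*) [AddCommGroup M] [Module R M] : Module R (FrobMod R φ M) :=
  inferInstanceAs (Module (FrobAlg R φ) (TensorProduct R (FrobAlg R φ) M))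

/-!
Give `Fⁿ(M) = FrobAlg R φ ⊗[R] M` the grading `deg (u ⊗ x) = deg u + q · deg x`; it respects
the tensor relations because `φ` multiplies degrees by `q`. Its projections commute with
homogeneous multiplication up to a shift of degree, so the components of an element of
`H⁰_m(Fⁿ(M))` lie in `H⁰_m(Fⁿ(M))` again. Since `M` is finitely generated, its degrees are
bounded below by some `β₀`, so `Fⁿ(M)` lives in degrees `≥ q β₀`. A form of degree `b q` moves
such a component into degree `≥ q (β₀ + b) > a q + c`, where `H⁰_m(Fⁿ(M))` vanishes; and in a
standard graded ring `m^{bq}` is generated by the forms of degree `b q`.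
-/

open DirectSum TensorProduct

section StandardGraded

variable {K R : Type*} [CommSemiring K] [CommRing R] [Algebra K R]

theorem Ideal.span_coe_mul (P Q : Submodule K R) :
    Ideal.span ((P * Q : Submodule K R) : Set R) = Ideal.span P * Ideal.span Q := by
  rw [Ideal.span_mul_span', Submodule.mul_eq_span_mul_set, Ideal.span,
    Submodule.span_span_of_tower]

variable (𝒜 : ℕ → Submodule K R)

theorem span_succ_eq_span_one_pow (hstd : ∀ n : ℕ, 𝒜 (n + 1) = 𝒜 1 * 𝒜 n) (k : ℕ) :
    Ideal.span (𝒜 (k + 1) : Set R) = Ideal.span (𝒜 1 : Set R) ^ (k + 1) := by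
  induction k with
  | zero => rw [pow_one]
  | succ k ih => rw [hstd, Ideal.span_coe_mul, ih, pow_succ' _ (k + 1)]

variable [GradedAlgebra 𝒜]

theorem irrelevant_eq_span_one (hstd : ∀ n : ℕ, 𝒜 (n + 1) = 𝒜 1 * 𝒜 n) :
    (HomogeneousIdeal.irrelevant 𝒜).toIdeal = Ideal.span (𝒜 1 : Set R) := by
  refine le_antisymm ?_ (Ideal.span_le.mpr fun x hx ↦
    HomogeneousIdeal.mem_irrelevant_of_mem 𝒜 Nat.one_pos hx)
  rw [HomogeneousIdeal.irrelevant_eq_span, Ideal.span_le]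
  simp only [Set.iUnion_subset_iff]
  intro i hi x hx
  obtain ⟨k, rfl⟩ := Nat.exists_eq_add_of_lt hi
  have := Ideal.subset_span (α := R) hx
  rw [zero_add, span_succ_eq_span_one_pow 𝒜 hstd] at this
  exact Ideal.pow_le_self k.succ_ne_zero this

theorem irrelevant_pow_eq_span (hstd : ∀ n : ℕ, 𝒜 (n + 1) = 𝒜 1 * 𝒜 n) (k : ℕ) :
    (HomogeneousIdeal.irrelevant 𝒜).toIdeal ^ (k + 1) = Ideal.span (𝒜 (k + 1) : Set R) := by
  rw [irrelevant_eq_span_one 𝒜 hstd, span_succ_eq_span_one_pow 𝒜 hstd k]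

end StandardGraded

section TorsionByIrrelevant

variable {K R M : Type*} [CommSemiring K] [CommRing R] [Algebra K R]
  (𝒜 : ℕ → Submodule K R) [GradedAlgebra 𝒜] [AddCommGroup M] [Module R M]

theorem mem_H0_iff {J : Ideal R} {z : M} :
    z ∈ H0 J M ↔ ∃ k : ℕ, z ∈ Submodule.torsionBySet R M (J ^ k : Ideal R) :=
  Submodule.mem_iSup_of_directed _ <| Monotone.directed_le fun _ _ hkl ↦
    Submodule.torsionBySet_le_torsionBySet_of_subset (Ideal.pow_le_pow_right hkl)

theorem torsionBySet_irrelevant_pow (hstd : ∀ n : ℕ, 𝒜 (n + 1) = 𝒜 1 * 𝒜 n) (k : ℕ) :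
    Submodule.torsionBySet R M ((HomogeneousIdeal.irrelevant 𝒜).toIdeal ^ (k + 1) : Ideal R) =
      Submodule.torsionBySet R M (𝒜 (k + 1) : Set R) := by
  rw [irrelevant_pow_eq_span 𝒜 hstd]
  exact (Submodule.torsionBySet_eq_torsionBySet_span _).symm

theorem mem_H0_irrelevant_iff (hstd : ∀ n : ℕ, 𝒜 (n + 1) = 𝒜 1 * 𝒜 n) {z : M} :
    z ∈ H0 (HomogeneousIdeal.irrelevant 𝒜).toIdeal M ↔
      ∃ k : ℕ, ∀ h ∈ 𝒜 (k + 1), h • z = 0 := by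
  rw [mem_H0_iff]
  constructor
  · rintro ⟨k, hk⟩
    have hk' := Submodule.torsionBySet_le_torsionBySet_of_subset
      (Ideal.pow_le_pow_right k.le_succ) hk
    rw [torsionBySet_irrelevant_pow 𝒜 hstd, Submodule.mem_torsionBySet_iff] at hk'
    exact ⟨k, fun h hh ↦ hk' ⟨h, hh⟩⟩
  · rintro ⟨k, hk⟩
    refine ⟨k + 1, ?_⟩
    rw [torsionBySet_irrelevant_pow 𝒜 hstd, Submodule.mem_torsionBySet_iff]
    exact fun h ↦ hk h h.2

theorem irrelevant_pow_smul_H0_eq_bot (hstd : ∀ n : ℕ, 𝒜 (n + 1) = 𝒜 1 * 𝒜 n) {k : ℕ}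
    (h : ∀ g ∈ 𝒜 (k + 1), ∀ z ∈ H0 (HomogeneousIdeal.irrelevant 𝒜).toIdeal M, g • z = 0) :
    (HomogeneousIdeal.irrelevant 𝒜).toIdeal ^ (k + 1) •
      H0 (HomogeneousIdeal.irrelevant 𝒜).toIdeal M = ⊥ := by
  refine eq_bot_iff.mpr <| Submodule.smul_le.mpr fun g hg z hz ↦ ?_
  have hz' : z ∈ Submodule.torsionBySet R M (𝒜 (k + 1) : Set R) :=
    (Submodule.mem_torsionBySet_iff _ _).mpr fun g ↦ h g g.2 z hz
  rw [← torsionBySet_irrelevant_pow 𝒜 hstd, Submodule.mem_torsionBySet_iff] at hz'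
  exact hz' ⟨g, hg⟩

end TorsionByIrrelevant

theorem decompose_addMonoidHom_ext {ι σ M G : Type*} [DecidableEq ι] [AddCommMonoid M]
    [SetLike σ M] [AddSubmonoidClass σ M] (ℳ : ι → σ) [Decomposition ℳ] [AddMonoid G]
    {f g : M →+ G} (h : ∀ i, ∀ x ∈ ℳ i, f x = g x) : f = g :=
  AddMonoidHom.ext fun x ↦ Decomposition.inductionOn ℳ (motive := fun x ↦ f x = g x)
    (by simp only [map_zero]) (fun x ↦ h _ x x.2)
    (fun x y hx hy ↦ by simp only [map_add, hx, hy]) x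

section GradedModule

variable {K R M : Type*} [CommSemiring K] [CommRing R] [Algebra K R]
  [AddCommGroup M] [Module R M] [Module K M]

def IsGradedSMul (𝒜 : ℕ → Submodule K R) (ℳ : ℤ → Submodule K M) : Prop :=
  ∀ ⦃i : ℕ⦄ ⦃j : ℤ⦄ ⦃r : R⦄ ⦃x : M⦄, r ∈ 𝒜 i → x ∈ ℳ j → r • x ∈ ℳ (i + j)

variable {𝒜 : ℕ → Submodule K R} {ℳ : ℤ → Submodule K M} [Decomposition ℳ]

theorem IsGradedSMul.decompose_smul (hℳ : IsGradedSMul 𝒜 ℳ) {i : ℕ} {r : R} (hr : r ∈ 𝒜 i)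
    (x : M) (γ : ℤ) : (decompose ℳ (r • x) γ : M) = r • (decompose ℳ x (γ - i) : M) := by
  induction x using Decomposition.inductionOn ℳ with
  | zero => simp
  | @homogeneous δ v =>
    obtain ⟨v, hv⟩ := v
    have hrv := hℳ hr hv
    by_cases hγ : γ = i + δ
    · subst hγ
      rw [decompose_of_mem_same ℳ hrv, add_sub_cancel_left, decompose_of_mem_same ℳ hv]
    · rw [decompose_of_mem_ne ℳ hrv (Ne.symm hγ), decompose_of_mem_ne ℳ hv (by omega), smul_zero]
  | add x y hx hy =>
    simp only [smul_add, decompose_add, DirectSum.add_apply, Submodule.coe_add, hx, hy]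

variable [GradedAlgebra 𝒜]

theorem IsGradedSMul.exists_forall_lt_eq_bot [Module.Finite R M] (hℳ : IsGradedSMul 𝒜 ℳ) :
    ∃ β₀ : ℤ, ∀ β < β₀, ℳ β = ⊥ := by
  classical
  obtain ⟨S, hS⟩ := Module.Finite.fg_top (R := R) (M := M)
  obtain ⟨β₀, hβ₀⟩ := (S.biUnion fun s ↦ (decompose ℳ s).support).bddBelow
  have hlow : ∀ x : M, ∀ γ < β₀, (decompose ℳ x γ : M) = 0 := by
    intro x
    have hx : x ∈ Submodule.span R (S : Set M) := hS ▸ Submodule.mem_top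
    induction hx using Submodule.span_induction with
    | mem s hs =>
      intro γ hγ
      by_contra hne
      refine hγ.not_ge (hβ₀ (Finset.mem_coe.mpr (Finset.mem_biUnion.mpr ⟨s, hs, ?_⟩)))
      exact DFinsupp.mem_support_iff.mpr fun h ↦ hne (by rw [h]; rfl)
    | zero => simp
    | add x y _ _ hx hy =>
      intro γ hγ
      simp only [decompose_add, DirectSum.add_apply, Submodule.coe_add, hx γ hγ, hy γ hγ, add_zero]
    | smul r x _ hx =>
      induction r using Decomposition.inductionOn 𝒜 with
      | zero => simp
      | homogeneous r =>
        intro γ hγ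
        rw [hℳ.decompose_smul r.2, hx _ (by omega), smul_zero]
      | add r r' hr hr' =>
        intro γ hγ
        simp only [add_smul, decompose_add, DirectSum.add_apply, Submodule.coe_add, hr γ hγ,
          hr' γ hγ, add_zero]
  refine ⟨β₀, fun β hβ ↦ eq_bot_iff.mpr fun v hv ↦ ?_⟩
  rw [Submodule.mem_bot, ← decompose_of_mem_same ℳ hv]
  exact hlow v β hβ

end GradedModule

namespace FrobMod

variable {K R M : Type*} [CommSemiring K] [CommRing R] [Algebra K R]
  [AddCommGroup M] [Module R M] [Module K M]
  (𝒜 : ℕ → Submodule K R) (φ : R →+* R) (ℳ : ℤ → Submodule K M) (q : ℕ)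

/-- Typed as `FrobMod` so that `R` acts through the left factor, not through `φ`. -/
noncomputable def tmulHom : R →+ M →+ FrobMod R φ M :=
  (LinearMap.toAddMonoidHom'.comp (TensorProduct.mk R (FrobAlg R φ) M).toAddMonoidHom :
    FrobAlg R φ →+ M →+ FrobAlg R φ ⊗[R] M)

theorem tmulHom_apply (u : R) (x : M) : tmulHom φ u x = FrobAlg.of R φ u ⊗ₜ[R] x := rfl

theorem smul_tmulHom (g u : R) (x : M) : g • tmulHom φ u x = tmulHom φ (g * u) x := by
  show FrobAlg.of R φ g • (FrobAlg.of R φ u ⊗ₜ[R] x) = _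
  rw [TensorProduct.smul_tmul']
  rfl

theorem tmulHom_smul (r u : R) (x : M) : tmulHom φ u (r • x) = tmulHom φ (φ r * u) x :=
  (TensorProduct.smul_tmul (R := R) (R' := R) r (FrobAlg.of R φ u) x).symm

noncomputable def gradedPiece (t : ℤ) : AddSubgroup (FrobMod R φ M) :=
  AddSubgroup.closure
    {z : FrobMod R φ M |
      ∃ (α : ℕ) (β : ℤ) (r : R) (x : M), r ∈ 𝒜 α ∧ x ∈ ℳ β ∧
        (α : ℤ) + (q : ℤ) * β = t ∧ z = (FrobAlg.of R φ r) ⊗ₜ[R] x}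

variable {𝒜 φ ℳ q}

theorem tmulHom_mem_gradedPiece {α : ℕ} {β : ℤ} {u : R} {x : M} (hu : u ∈ 𝒜 α)
    (hx : x ∈ ℳ β) : tmulHom φ u x ∈ gradedPiece 𝒜 φ ℳ q (α + q * β) :=
  AddSubgroup.subset_closure ⟨α, β, u, x, hu, hx, rfl, rfl⟩

theorem gradedPiece_eq_bot_of_lt {β₀ : ℤ} (hβ₀ : ∀ β < β₀, ℳ β = ⊥) {t : ℤ}
    (ht : t < q * β₀) : gradedPiece 𝒜 φ ℳ q t = ⊥ := by
  refine AddSubgroup.closure_eq_bot_iff.mpr ?_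
  rintro _ ⟨α, β, u, x, -, hx, rfl, rfl⟩
  have hβ : β < β₀ := lt_of_mul_lt_mul_left (by omega) (Int.natCast_nonneg q)
  rw [hβ₀ β hβ, Submodule.mem_bot] at hx
  rw [hx, TensorProduct.tmul_zero]
  rfl

variable [GradedAlgebra 𝒜]

theorem smul_mem_gradedPiece {d : ℕ} {g : R} (hg : g ∈ 𝒜 d) {t : ℤ} {z : FrobMod R φ M}
    (hz : z ∈ gradedPiece 𝒜 φ ℳ q t) : g • z ∈ gradedPiece 𝒜 φ ℳ q (t + d) := by
  induction hz using AddSubgroup.closure_induction with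
  | mem z hz =>
    obtain ⟨α, β, u, x, hu, hx, rfl, rfl⟩ := hz
    rw [← tmulHom_apply, smul_tmulHom]
    convert tmulHom_mem_gradedPiece (q := q) (SetLike.mul_mem_graded hg hu) hx using 2
    push_cast
    ring
  | zero => simpa only [smul_zero] using zero_mem _
  | add z z' _ _ hz hz' => simpa only [smul_add] using add_mem hz hz'
  | neg z _ hz => simpa only [smul_neg] using neg_mem hz

variable [Decomposition ℳ]

@[elab_as_elim]
theorem induction_on {motive : FrobMod R φ M → Prop} (zero : motive 0)
    (tmul : ∀ {α : ℕ} {β : ℤ} {u : R} {x : M}, u ∈ 𝒜 α → x ∈ ℳ β → motive (tmulHom φ u x))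
    (add : ∀ z z', motive z → motive z' → motive (z + z')) (z : FrobMod R φ M) : motive z := by
  have hu (u : R) : ∀ x, motive (tmulHom φ u x) := by
    induction u using Decomposition.inductionOn 𝒜 with
    | zero => simpa only [map_zero, AddMonoidHom.zero_apply] using fun _ ↦ zero
    | homogeneous u =>
      intro x
      induction x using Decomposition.inductionOn ℳ with
      | zero => simpa only [map_zero] using zero
      | homogeneous x => exact tmul u.2 x.2
      | add x y hx hy => simpa only [map_add] using add _ _ hx hy
    | add u u' hu hu' =>
      simpa only [map_add, AddMonoidHom.add_apply] using fun x ↦ add _ _ (hu x) (hu' x)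
  induction z using TensorProduct.induction_on with
  | zero => exact zero
  | tmul u x => exact hu u x
  | add z z' hz hz' => exact add _ _ hz hz'

variable (𝒜 φ ℳ q) in
/-- The biadditive map placing `u ⊗ x` in degree `α + q β` for `u ∈ 𝒜 α`, `x ∈ ℳ β`. -/
noncomputable def decomposeAux : R →+ M →+ ⨁ _ : ℤ, FrobMod R φ M :=
  ((toAddMonoid fun α : ℕ ↦ (toAddMonoid fun β : ℤ ↦
      ((AddMonoidHom.compHom (of (fun _ : ℤ ↦ FrobMod R φ M) (α + q * β))).comp
        ((tmulHom φ).comp (𝒜 α).subtype.toAddMonoidHom)).compl₂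
          (ℳ β).subtype.toAddMonoidHom |>.flip).flip).comp
    (decomposeAddEquiv 𝒜).toAddMonoidHom).compl₂ (decomposeAddEquiv ℳ).toAddMonoidHom

theorem decomposeAux_of_mem {α : ℕ} {β : ℤ} {u : R} {x : M} (hu : u ∈ 𝒜 α)
    (hx : x ∈ ℳ β) :
    decomposeAux 𝒜 φ ℳ q u x = of (fun _ : ℤ ↦ FrobMod R φ M) (α + q * β) (tmulHom φ u x) := by
  simp [decomposeAux, decompose_of_mem 𝒜 hu, decompose_of_mem ℳ hx]

theorem decomposeAux_mul_left (hφ : ∀ ⦃i : ℕ⦄ ⦃r : R⦄, r ∈ 𝒜 i → φ r ∈ 𝒜 (q * i))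
    (hℳ : IsGradedSMul 𝒜 ℳ) (r u : R) (x : M) :
    decomposeAux 𝒜 φ ℳ q (φ r * u) x = decomposeAux 𝒜 φ ℳ q u (r • x) := by
  induction r using Decomposition.inductionOn 𝒜 generalizing u x with
  | zero => simp only [map_zero, zero_mul, zero_smul, AddMonoidHom.zero_apply]
  | @homogeneous i r =>
    obtain ⟨r, hr⟩ := r
    suffices (decomposeAux 𝒜 φ ℳ q).comp (AddMonoidHom.mulLeft (φ r)) =
        (decomposeAux 𝒜 φ ℳ q).compl₂ (DistribSMul.toAddMonoidHom M r) from
      DFunLike.congr_fun (DFunLike.congr_fun this u) x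
    refine decompose_addMonoidHom_ext 𝒜 fun α u hu ↦
      decompose_addMonoidHom_ext ℳ fun β x hx ↦ ?_
    simp only [AddMonoidHom.comp_apply, AddMonoidHom.compl₂_apply, AddMonoidHom.coe_mulLeft,
      DistribSMul.toAddMonoidHom_apply]
    rw [decomposeAux_of_mem (SetLike.mul_mem_graded (hφ hr) hu) hx,
      decomposeAux_of_mem hu (hℳ hr hx), tmulHom_smul]
    congr 2
    push_cast
    ring
  | add r r' hr hr' =>
    simp only [map_add, add_mul, add_smul, AddMonoidHom.add_apply, hr, hr']

variable (𝒜 φ ℳ q) in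
noncomputable def decompose (hφ : ∀ ⦃i : ℕ⦄ ⦃r : R⦄, r ∈ 𝒜 i → φ r ∈ 𝒜 (q * i))
    (hℳ : IsGradedSMul 𝒜 ℳ) : FrobMod R φ M →+ ⨁ _ : ℤ, FrobMod R φ M :=
  TensorProduct.liftAddHom (decomposeAux 𝒜 φ ℳ q) (decomposeAux_mul_left hφ hℳ)

variable {hφ : ∀ ⦃i : ℕ⦄ ⦃r : R⦄, r ∈ 𝒜 i → φ r ∈ 𝒜 (q * i)} {hℳ : IsGradedSMul 𝒜 ℳ}

theorem decompose_tmulHom {α : ℕ} {β : ℤ} {u : R} {x : M} (hu : u ∈ 𝒜 α)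
    (hx : x ∈ ℳ β) : decompose 𝒜 φ ℳ q hφ hℳ (tmulHom φ u x) =
      of (fun _ : ℤ ↦ FrobMod R φ M) (α + q * β) (tmulHom φ u x) :=
  decomposeAux_of_mem hu hx

theorem decompose_injective : Function.Injective (decompose 𝒜 φ ℳ q hφ hℳ) := by
  refine Function.LeftInverse.injective (g := toAddMonoid fun _ ↦ AddMonoidHom.id _)
    fun z ↦ ?_
  induction z using induction_on (𝒜 := 𝒜) (ℳ := ℳ) with
  | zero => simp only [map_zero]
  | tmul hu hx => rw [decompose_tmulHom hu hx, toAddMonoid_of, AddMonoidHom.id_apply]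
  | add z z' hz hz' => simp only [map_add, hz, hz']

theorem decompose_apply_mem_gradedPiece (z : FrobMod R φ M) (t : ℤ) :
    decompose 𝒜 φ ℳ q hφ hℳ z t ∈ gradedPiece 𝒜 φ ℳ q t := by
  induction z using induction_on (𝒜 := 𝒜) (ℳ := ℳ) generalizing t with
  | zero => simpa only [map_zero, DirectSum.zero_apply] using zero_mem _
  | @tmul α β u x hu hx =>
    rw [decompose_tmulHom hu hx]
    by_cases ht : α + q * β = t
    · rw [← ht, of_eq_same]
      exact tmulHom_mem_gradedPiece hu hx
    · rw [of_eq_of_ne _ _ _ (Ne.symm ht)]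
      exact zero_mem _
  | add z z' hz hz' =>
    simpa only [map_add, DirectSum.add_apply] using add_mem (hz t) (hz' t)

theorem decompose_smul_apply {k : ℕ} {g : R} (hg : g ∈ 𝒜 k) (z : FrobMod R φ M) (t : ℤ) :
    decompose 𝒜 φ ℳ q hφ hℳ (g • z) t = g • decompose 𝒜 φ ℳ q hφ hℳ z (t - k) := by
  induction z using induction_on (𝒜 := 𝒜) (ℳ := ℳ) generalizing t with
  | zero => simp only [smul_zero, map_zero, DirectSum.zero_apply]
  | @tmul α β u x hu hx =>
    rw [smul_tmulHom, decompose_tmulHom (SetLike.mul_mem_graded hg hu) hx,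
      decompose_tmulHom hu hx]
    by_cases ht : t = α + q * β + k
    · have hdeg : ((k + α : ℕ) : ℤ) + q * β = α + q * β + k := by push_cast; ring
      rw [ht, add_sub_cancel_right, hdeg, of_eq_same, of_eq_same, smul_tmulHom]
    · rw [of_eq_of_ne _ _ _ (by push_cast; omega), of_eq_of_ne _ _ _ (by omega), smul_zero]
  | add z z' hz hz' => simp only [smul_add, map_add, DirectSum.add_apply, hz, hz']

theorem decompose_apply_mem_H0 (hstd : ∀ n : ℕ, 𝒜 (n + 1) = 𝒜 1 * 𝒜 n) {z : FrobMod R φ M}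
    (hz : z ∈ H0 (HomogeneousIdeal.irrelevant 𝒜).toIdeal (FrobMod R φ M)) (t : ℤ) :
    decompose 𝒜 φ ℳ q hφ hℳ z t ∈
      H0 (HomogeneousIdeal.irrelevant 𝒜).toIdeal (FrobMod R φ M) := by
  rw [mem_H0_irrelevant_iff 𝒜 hstd] at hz ⊢
  obtain ⟨k, hk⟩ := hz
  refine ⟨k, fun h hh ↦ ?_⟩
  rw [← add_sub_cancel_right t ((k + 1 : ℕ) : ℤ), ← decompose_smul_apply hh, hk h hh, map_zero,
    DirectSum.zero_apply]

theorem smul_eq_zero_of_mem_H0 (hφ : ∀ ⦃i : ℕ⦄ ⦃r : R⦄, r ∈ 𝒜 i → φ r ∈ 𝒜 (q * i))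
    (hℳ : IsGradedSMul 𝒜 ℳ) (hstd : ∀ n : ℕ, 𝒜 (n + 1) = 𝒜 1 * 𝒜 n) {β₀ : ℤ}
    (hβ₀ : ∀ β < β₀, ℳ β = ⊥) {B : ℤ}
    (hB : ∀ t : ℤ, B < t → ∀ z ∈ gradedPiece 𝒜 φ ℳ q t,
      z ∈ H0 (HomogeneousIdeal.irrelevant 𝒜).toIdeal (FrobMod R φ M) → z = 0)
    {d : ℕ} (hd : B < q * β₀ + d) {g : R} (hg : g ∈ 𝒜 d) {z : FrobMod R φ M}
    (hz : z ∈ H0 (HomogeneousIdeal.irrelevant 𝒜).toIdeal (FrobMod R φ M)) : g • z = 0 := by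
  refine decompose_injective (hφ := hφ) (hℳ := hℳ) ?_
  ext t
  rw [decompose_smul_apply hg, map_zero, DirectSum.zero_apply]
  have hmem := decompose_apply_mem_gradedPiece (hφ := hφ) (hℳ := hℳ) z (t - d)
  rcases lt_or_ge (t - d) (q * β₀) with hlow | hhigh
  · rw [gradedPiece_eq_bot_of_lt hβ₀ hlow, AddSubgroup.mem_bot] at hmem
    rw [hmem, smul_zero]
  · refine hB t (by omega) _ ?_ (Submodule.smul_mem _ g (decompose_apply_mem_H0 hstd hz _))
    simpa only [sub_add_cancel] using smul_mem_gradedPiece hg hmem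

end FrobMod

open TensorProduct in
theorem lc_of_linear_bound_on_end_general
    {K R : Type*} [Field K] [CommRing R] [Algebra K R]
    (p : ℕ) [Fact p.Prime] [CharP R p]
    (𝒜 : ℕ → Submodule K R) [GradedAlgebra 𝒜] (hstd : IsStandardGraded 𝒜)
    (M : Type*) [AddCommGroup M] [Module R M] [Module K M]
    [Module.Finite R M]
    (ℳ : ℤ → Submodule K M) (hdecomp : DirectSum.IsInternal ℳ)
    (hgsmul : ∀ (i : ℕ) (j : ℤ) (r : R) (x : M), r ∈ 𝒜 i → x ∈ ℳ j → r • x ∈ ℳ (i + j))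
    (a c : ℤ)
    (hend : ∀ n : ℕ, ∀ t : ℤ, a * (p ^ n : ℤ) + c < t →
      ∀ z ∈ AddSubgroup.closure
        {z : FrobMod R (iterateFrobenius R p n) M |
          ∃ (α : ℕ) (β : ℤ) (r : R) (x : M), r ∈ 𝒜 α ∧ x ∈ ℳ β ∧
            (α : ℤ) + (p ^ n : ℤ) * β = t ∧
            z = (FrobAlg.of R (iterateFrobenius R p n) r) ⊗ₜ[R] x},
        z ∈ H0 ((HomogeneousIdeal.irrelevant 𝒜).toIdeal)
              (FrobMod R (iterateFrobenius R p n) M) → z = 0) :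
    ∃ b : ℕ, ∀ n : ℕ,
      ((HomogeneousIdeal.irrelevant 𝒜).toIdeal ^ (b * p ^ n)) •
        H0 ((HomogeneousIdeal.irrelevant 𝒜).toIdeal)
          (FrobMod R (iterateFrobenius R p n) M) = ⊥ := by
  let _ : Decomposition ℳ := hdecomp.chooseDecomposition
  have hℳ : IsGradedSMul 𝒜 ℳ := hgsmul
  obtain ⟨β₀, hβ₀⟩ := hℳ.exists_forall_lt_eq_bot
  set b := (a - β₀ + |c|).toNat + 1
  refine ⟨b, fun n ↦ ?_⟩
  have hp : 0 < p := (Fact.out : p.Prime).pos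
  have hq : (1 : ℤ) ≤ p ^ n := one_le_pow₀ (mod_cast hp)
  have hφ : ∀ ⦃i : ℕ⦄ ⦃r : R⦄, r ∈ 𝒜 i → iterateFrobenius R p n r ∈ 𝒜 (p ^ n * i) :=
    fun i r hr ↦ by simpa only [iterateFrobenius_def, smul_eq_mul] using SetLike.pow_mem_graded (p ^ n) hr
  obtain ⟨k, hk⟩ : ∃ k, b * p ^ n = k + 1 := Nat.exists_eq_add_one.mpr (by positivity)
  rw [hk]
  refine irrelevant_pow_smul_H0_eq_bot 𝒜 hstd.2 fun g hg z hz ↦ ?_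
  rw [← hk] at hg
  have hvanish : ∀ t : ℤ, a * ((p ^ n : ℕ) : ℤ) + c < t →
      ∀ z ∈ FrobMod.gradedPiece 𝒜 (iterateFrobenius R p n) ℳ (p ^ n) t,
        z ∈ H0 (HomogeneousIdeal.irrelevant 𝒜).toIdeal _ → z = 0 := fun t ht z hz ↦
    hend n t (by simpa only [Nat.cast_pow] using ht) z
      (by simpa only [FrobMod.gradedPiece, Nat.cast_pow] using hz)
  refine FrobMod.smul_eq_zero_of_mem_H0 hφ hℳ hstd.2 hβ₀ hvanish ?_ hg hz
  -- `q β₀ + b q ≥ q (a + |c| + 1) ≥ a q + |c| + 1`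
  have hb : a - β₀ + |c| + 1 ≤ (b : ℤ) := by omega
  push_cast
  nlinarith [le_abs_self c, abs_nonneg c]

open TensorProduct in
/-- Lemma 4.3: if `end(H⁰_m(Fⁿ(M))) ≤ aq + c` for constants `a`, `c` not depending on `q = pⁿ`,
then `M` satisfies the (LC) property: `m^{bq}·H⁰_m(Fⁿ(M)) = 0` for some `b` independent of `q`.
The grading of `Fⁿ(M)` is the one induced from a graded presentation of `M`: the homogeneous
component of degree `t` is generated by the tensors `r ⊗ x` with `r ∈ 𝒜_α`, `x ∈ ℳ_β` and
`α + qβ = t`. -/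
theorem lc_of_linear_bound_on_end
    {K R : Type*} [Field K] [CommRing R] [Algebra K R] [IsNoetherianRing R]
    (p : ℕ) [Fact p.Prime] [CharP R p]
    (𝒜 : ℕ → Submodule K R) [GradedAlgebra 𝒜] (hstd : IsStandardGraded 𝒜)
    (M : Type*) [AddCommGroup M] [Module R M] [Module K M] [IsScalarTower K R M]
    [Module.Finite R M]
    (ℳ : ℤ → Submodule K M) (hdecomp : DirectSum.IsInternal ℳ)
    (hgsmul : ∀ (i : ℕ) (j : ℤ) (r : R) (x : M), r ∈ 𝒜 i → x ∈ ℳ j → r • x ∈ ℳ (i + j))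
    (a c : ℤ)
    (hend : ∀ n : ℕ, ∀ t : ℤ, a * (p ^ n : ℤ) + c < t →
      ∀ z ∈ AddSubgroup.closure
        {z : FrobMod R (iterateFrobenius R p n) M |
          ∃ (α : ℕ) (β : ℤ) (r : R) (x : M), r ∈ 𝒜 α ∧ x ∈ ℳ β ∧
            (α : ℤ) + (p ^ n : ℤ) * β = t ∧
            z = (FrobAlg.of R (iterateFrobenius R p n) r) ⊗ₜ[R] x},
        z ∈ H0 ((HomogeneousIdeal.irrelevant 𝒜).toIdeal)
              (FrobMod R (iterateFrobenius R p n) M) → z = 0) :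
    ∃ b : ℕ, ∀ n : ℕ,
      ((HomogeneousIdeal.irrelevant 𝒜).toIdeal ^ (b * p ^ n)) •
        H0 ((HomogeneousIdeal.irrelevant 𝒜).toIdeal)
          (FrobMod R (iterateFrobenius R p n) M) = ⊥ :=
  lc_of_linear_bound_on_end_general p 𝒜 hstd M ℳ hdecomp hgsmul a c hend
end

section
/- Let R = 𝔽_p[X, Y, Z]/(X³ + Y³ + Z³) be the Fermat cubic with irrelevant maximal ideal m = (x, y, z) and let I = (x, y). Then for every q = pⁿ: m^{2q+1}·H⁰_m(R/I^[q]) = 0 but m^{2q}·H⁰_m(R/I^[q]) ≠ 0; equivalently, since I is m-primary and H⁰_m(R/I^[q]) = R/I^[q], one has m^{2q+1} ⊆ (x^q, y^q) while m^{2q} ⊄ (x^q, y^q). -/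
set_option synthInstance.maxHeartbeats 1000000
set_option maxHeartbeats 1000000

/-- The coordinate ring of the Fermat cubic `X³ + Y³ + Z³ = 0` over `𝔽_p`. -/
abbrev FermatCubic (p : ℕ) : Type :=
  MvPolynomial (Fin 3) (ZMod p) ⧸
    Ideal.span {(MvPolynomial.X 0 : MvPolynomial (Fin 3) (ZMod p)) ^ 3 +
      MvPolynomial.X 1 ^ 3 + MvPolynomial.X 2 ^ 3}

/-- The image of a variable in the Fermat cubic coordinate ring. -/
noncomputable def fermatVar (p : ℕ) (i : Fin 3) : FermatCubic p :=
  Ideal.Quotient.mk _ (MvPolynomial.X i)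

/-!
Modulo `x³ + y³ + z³`, a monomial `x^a y^b z^c` of degree `2q + 1` equals
`± z^(c % 3) x^a y^b (x³ + y³)^(c / 3)`; every term `x^i y^j` of the expansion has
`i + j ≥ 2q - 1`, so `i ≥ q` or `j ≥ q`. Hence `m^(2q+1) ⊆ (x^q, y^q)`, the quotient
`R/(x^q, y^q)` is its own `H⁰_m`, and in characteristic `p` the Frobenius power `(x, y)^[q]` is
`(x^q, y^q)`. For the other direction, `x^(q-1) y^(q-1) z² ∈ m^(2q)` maps to the nonzero element
`u^(q-1) v^(q-1) t²` of `𝔽_p[u, v]/(u^q, v^q)[t]/(t³ + u³ + v³)`, a free module over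
`𝔽_p[u, v]/(u^q, v^q)` with basis `1, t, t²`.
-/

open Polynomial
open scoped Pointwise

theorem Ideal.frobPow_span {R : Type*} [CommRing R] (p : ℕ) [ExpChar R p] (s : Set R) (n : ℕ) :
    (Ideal.span s).frobPow (p ^ n) = Ideal.span ((· ^ p ^ n) '' s) :=
  Ideal.map_span (iterateFrobenius R p n) s

theorem Ideal.smul_top_quotient_eq_bot_iff {R : Type*} [CommRing R] (I J : Ideal R) :
    J • (⊤ : Submodule R (R ⧸ I)) = ⊥ ↔ J ≤ I := by
  rw [← Submodule.le_annihilator_iff, Submodule.annihilator_top, Ideal.annihilator_quotient]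

theorem H0_quotient_eq_top_of_pow_le {R : Type*} [CommRing R] {I J : Ideal R} {k : ℕ}
    (h : J ^ k ≤ I) : H0 J (R ⧸ I) = ⊤ := by
  refine eq_top_iff.mpr (le_trans (fun m _ => ?_) (le_iSup _ k))
  rw [Submodule.mem_torsionBySet_iff]
  rintro ⟨r, hr⟩
  have hann : r ∈ Module.annihilator R (R ⧸ I) := by
    rw [Ideal.annihilator_quotient]
    exact h hr
  exact Module.mem_annihilator.mp hann m

theorem exists_monomial_of_mem_triple_pow {M : Type*} [CommMonoid M] {x y z w : M} {N : ℕ}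
    (hw : w ∈ ({x, y, z} : Set M) ^ N) :
    ∃ a b c : ℕ, a + b + c = N ∧ w = x ^ a * y ^ b * z ^ c := by
  induction N generalizing w with
  | zero => exact ⟨0, 0, 0, rfl, by simpa using hw⟩
  | succ N ih =>
    obtain ⟨u, hu, v, hv, rfl⟩ := Set.mem_mul.mp (by rwa [pow_succ] at hw)
    obtain ⟨a, b, c, rfl, rfl⟩ := ih hu
    rcases hv with rfl | rfl | rfl
    · exact ⟨a + 1, b, c, by omega, by rw [pow_succ]; ac_rfl⟩
    · exact ⟨a, b + 1, c, by omega, by rw [pow_succ]; ac_rfl⟩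
    · exact ⟨a, b, c + 1, by omega, by rw [pow_succ]; ac_rfl⟩

theorem monomial_mem_span_triple_pow {R : Type*} [CommRing R] (x y z : R) (a b c : ℕ) :
    x ^ a * y ^ b * z ^ c ∈ Ideal.span {x, y, z} ^ (a + b + c) := by
  simp only [pow_add]
  refine Ideal.mul_mem_mul (Ideal.mul_mem_mul ?_ ?_) ?_ <;>
    exact Ideal.pow_mem_pow (Ideal.subset_span (by simp)) _

theorem Ideal.span_triple_pow_le_iff {R : Type*} [CommRing R] {x y z : R} {N : ℕ}
    {K : Ideal R} :
    Ideal.span {x, y, z} ^ N ≤ K ↔ ∀ a b c : ℕ, a + b + c = N → x ^ a * y ^ b * z ^ c ∈ K := by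
  refine ⟨fun h a b c habc => h (habc ▸ monomial_mem_span_triple_pow x y z a b c), fun h => ?_⟩
  rw [Ideal.span, Submodule.span_pow, Submodule.span_le]
  intro w hw
  obtain ⟨a, b, c, habc, rfl⟩ := exists_monomial_of_mem_triple_pow hw
  exact h a b c habc

section CubicRelation

variable {R : Type*} [CommRing R]

theorem pow_mul_pow_mem_span_pow_pair (x y : R) {q a b : ℕ} (h : q ≤ a ∨ q ≤ b) :
    x ^ a * y ^ b ∈ Ideal.span {x ^ q, y ^ q} := by
  rcases h with h | h
  · exact Ideal.mem_of_dvd _ ((pow_dvd_pow x h).mul_right _)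
      (Ideal.subset_span (Set.mem_insert _ _))
  · exact Ideal.mem_of_dvd _ ((pow_dvd_pow y h).mul_left _)
      (Ideal.subset_span (Set.mem_insert_of_mem _ rfl))

theorem pow_mul_pow_mul_add_cube_pow_mem_span_pow_pair (x y : R) {q a b k : ℕ}
    (h : 2 * q ≤ a + b + 3 * k + 1) :
    x ^ a * y ^ b * (x ^ 3 + y ^ 3) ^ k ∈ Ideal.span {x ^ q, y ^ q} := by
  induction k generalizing a b with
  | zero => simpa using pow_mul_pow_mem_span_pow_pair x y (q := q) (by omega)
  | succ k ih =>
    have hsplit : x ^ a * y ^ b * (x ^ 3 + y ^ 3) ^ (k + 1) =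
        x ^ (a + 3) * y ^ b * (x ^ 3 + y ^ 3) ^ k + x ^ a * y ^ (b + 3) * (x ^ 3 + y ^ 3) ^ k := by
      ring
    rw [hsplit]
    exact Ideal.add_mem _ (ih (by omega)) (ih (by omega))

theorem monomial_mem_span_pow_pair_of_cube_eq {x y z : R} (hz : z ^ 3 = -(x ^ 3 + y ^ 3))
    {q a b c : ℕ} (h : a + b + c = 2 * q + 1) :
    x ^ a * y ^ b * z ^ c ∈ Ideal.span {x ^ q, y ^ q} := by
  have hc : x ^ a * y ^ b * z ^ c =
      (-1) ^ (c / 3) * z ^ (c % 3) * (x ^ a * y ^ b * (x ^ 3 + y ^ 3) ^ (c / 3)) := by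
    conv_lhs => rw [← Nat.div_add_mod c 3, pow_add, pow_mul, hz, neg_pow]
    ring
  rw [hc]
  exact Ideal.mul_mem_left _ _ (pow_mul_pow_mul_add_cube_pow_mem_span_pow_pair x y (by omega))

theorem span_triple_pow_le_span_pow_pair {x y z : R} (h : x ^ 3 + y ^ 3 + z ^ 3 = 0) (q : ℕ) :
    Ideal.span {x, y, z} ^ (2 * q + 1) ≤ Ideal.span {x ^ q, y ^ q} :=
  Ideal.span_triple_pow_le_iff.mpr fun _ _ _ =>
    monomial_mem_span_pow_pair_of_cube_eq (by linear_combination h)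

end CubicRelation

theorem AdjoinRoot.of_mul_root_pow_ne_zero {A : Type*} [CommRing A] {f : A[X]} (hf : f.Monic)
    {a : A} (ha : a ≠ 0) {k : ℕ} (hk : k < f.natDegree) : of f a * root f ^ k ≠ 0 := by
  rw [← mk_C, ← mk_X, ← map_pow, ← map_mul, C_mul_X_pow_eq_monomial]
  exact mk_ne_zero_of_natDegree_lt hf (by simpa using ha) ((natDegree_monomial_le a).trans_lt hk)

theorem AdjoinRoot.root_pow_ne_zero {A : Type*} [CommRing A] [Nontrivial A] {f : A[X]}
    (hf : f.Monic) {k : ℕ} (hk : k < f.natDegree) : root f ^ k ≠ 0 := by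
  simpa using of_mul_root_pow_ne_zero hf one_ne_zero hk

namespace FermatCubic

variable (k : Type*) [CommRing k] (q : ℕ)

/-- `k[u, v]/(u^q, v^q)`, adjoining `u` and then `v`. -/
abbrev TruncatedPlane : Type _ := AdjoinRoot (X ^ q : (AdjoinRoot (X ^ q : k[X]))[X])

namespace TruncatedPlane

noncomputable def u : TruncatedPlane k q := AdjoinRoot.of _ (AdjoinRoot.root _)

noncomputable def v : TruncatedPlane k q := AdjoinRoot.root _

theorem u_pow : u k q ^ q = 0 := by
  rw [u, ← map_pow, ← AdjoinRoot.mk_X, ← map_pow, AdjoinRoot.mk_self, map_zero]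

theorem v_pow : v k q ^ q = 0 := by
  rw [v, ← AdjoinRoot.mk_X, ← map_pow, AdjoinRoot.mk_self]

theorem u_pow_mul_v_pow_ne_zero [Nontrivial k] (hq : 0 < q) :
    u k q ^ (q - 1) * v k q ^ (q - 1) ≠ 0 := by
  have hroot := AdjoinRoot.root_pow_ne_zero (monic_X_pow (R := k) q)
    (by rw [natDegree_X_pow]; omega : q - 1 < (X ^ q : k[X]).natDegree)
  have : Nontrivial (AdjoinRoot (X ^ q : k[X])) := nontrivial_of_ne _ 0 hroot
  rw [u, ← map_pow]
  exact AdjoinRoot.of_mul_root_pow_ne_zero (monic_X_pow q) hroot (by rw [natDegree_X_pow]; omega)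

end TruncatedPlane

open TruncatedPlane

/-- `k[u, v, t]/(u^q, v^q, t³ + u³ + v³)`, a quotient of `R/(x^q, y^q)` when `k = 𝔽_p`. -/
abbrev CubicModel : Type _ := AdjoinRoot (X ^ 3 + C (u k q ^ 3 + v k q ^ 3))

namespace CubicModel

noncomputable def x : CubicModel k q := AdjoinRoot.of _ (u k q)

noncomputable def y : CubicModel k q := AdjoinRoot.of _ (v k q)

noncomputable def z : CubicModel k q := AdjoinRoot.root _

theorem x_cube_add : x k q ^ 3 + y k q ^ 3 + z k q ^ 3 = 0 := by
  have h := AdjoinRoot.eval₂_root (X ^ 3 + C (u k q ^ 3 + v k q ^ 3))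
  rw [eval₂_add, eval₂_X_pow, eval₂_C, map_add (AdjoinRoot.of _) (u k q ^ 3),
    map_pow (AdjoinRoot.of _) (u k q), map_pow (AdjoinRoot.of _) (v k q)] at h
  rw [x, y, z]
  linear_combination h

theorem x_pow : x k q ^ q = 0 := by
  rw [x, ← map_pow, u_pow, map_zero]

theorem y_pow : y k q ^ q = 0 := by
  rw [y, ← map_pow, v_pow, map_zero]

theorem x_pow_mul_y_pow_mul_z_sq_ne_zero [Nontrivial k] (hq : 0 < q) :
    x k q ^ (q - 1) * y k q ^ (q - 1) * z k q ^ 2 ≠ 0 := by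
  have huv := u_pow_mul_v_pow_ne_zero k q hq
  have : Nontrivial (TruncatedPlane k q) := nontrivial_of_ne _ 0 huv
  have hdeg : 2 < (X ^ 3 + C (u k q ^ 3 + v k q ^ 3)).natDegree := by
    rw [natDegree_X_pow_add_C]
    norm_num
  have h := AdjoinRoot.of_mul_root_pow_ne_zero (monic_X_pow_add_C _ three_ne_zero) huv hdeg
  rwa [map_mul, map_pow, map_pow] at h

end CubicModel

open CubicModel

theorem fermatVar_cube_add (p : ℕ) :
    fermatVar p 0 ^ 3 + fermatVar p 1 ^ 3 + fermatVar p 2 ^ 3 = 0 := by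
  simp only [fermatVar, ← map_pow, ← map_add]
  exact Ideal.Quotient.eq_zero_iff_mem.mpr (Ideal.mem_span_singleton_self _)

noncomputable def toCubicModel (p q : ℕ) : FermatCubic p →+* CubicModel (ZMod p) q :=
  Ideal.Quotient.lift _ (MvPolynomial.eval₂Hom (algebraMap (ZMod p) _) ![x _ q, y _ q, z _ q])
    fun f hf => by
      obtain ⟨g, rfl⟩ := Ideal.mem_span_singleton'.mp hf
      simp only [map_mul, map_add, map_pow, MvPolynomial.eval₂Hom_X', Matrix.cons_val]
      rw [x_cube_add, mul_zero]

theorem toCubicModel_fermatVar (p q : ℕ) (i : Fin 3) :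
    toCubicModel p q (fermatVar p i) = ![x _ q, y _ q, z _ q] i := by
  rw [toCubicModel, fermatVar, Ideal.Quotient.lift_mk, MvPolynomial.eval₂Hom_X']

theorem pow_mul_pow_mul_sq_notMem_span_pow_pair (p : ℕ) [Fact p.Prime] {q : ℕ} (hq : 0 < q) :
    fermatVar p 0 ^ (q - 1) * fermatVar p 1 ^ (q - 1) * fermatVar p 2 ^ 2 ∉
      Ideal.span {fermatVar p 0 ^ q, fermatVar p 1 ^ q} := by
  intro hmem
  obtain ⟨a, b, hab⟩ := Ideal.mem_span_pair.mp hmem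
  have h := congrArg (toCubicModel p q) hab
  simp only [map_add, map_mul, map_pow, toCubicModel_fermatVar, Matrix.cons_val, x_pow, y_pow,
    mul_zero, add_zero] at h
  exact x_pow_mul_y_pow_mul_z_sq_ne_zero _ q hq h.symm

instance charP (p : ℕ) [Fact p.Prime] : CharP (FermatCubic p) p :=
  have : Nontrivial (CubicModel (ZMod p) 1) :=
    nontrivial_of_ne _ 0 (x_pow_mul_y_pow_mul_z_sq_ne_zero (ZMod p) 1 one_pos)
  have : Nontrivial (FermatCubic p) := (toCubicModel p 1).domain_nontrivial
  charP_of_injective_algebraMap (algebraMap (ZMod p) _).injective p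

end FermatCubic

/-- Lemma 11.1: in the Fermat cubic `R = 𝔽_p[X,Y,Z]/(X³+Y³+Z³)` with irrelevant maximal ideal
`m = (x,y,z)` and `I = (x,y)`, for every `q = pⁿ` one has
`m^{2q+1}·H⁰_m(R/I^[q]) = 0` but `m^{2q}·H⁰_m(R/I^[q]) ≠ 0`; equivalently (as `I` is
`m`-primary, so that `H⁰_m(R/I^[q]) = R/I^[q]`), `m^{2q+1} ⊆ (x^q, y^q)` while
`m^{2q} ⊄ (x^q, y^q)`. -/
theorem fermat_cubic_lc_exponent (p : ℕ) [Fact p.Prime] : ∀ n : ℕ,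
    (Ideal.span {fermatVar p 0, fermatVar p 1, fermatVar p 2} ^ (2 * p ^ n + 1)) •
        H0 (Ideal.span {fermatVar p 0, fermatVar p 1, fermatVar p 2})
          (FermatCubic p ⧸ (Ideal.span {fermatVar p 0, fermatVar p 1}).frobPow (p ^ n)) = ⊥ ∧
    (Ideal.span {fermatVar p 0, fermatVar p 1, fermatVar p 2} ^ (2 * p ^ n)) •
        H0 (Ideal.span {fermatVar p 0, fermatVar p 1, fermatVar p 2})
          (FermatCubic p ⧸ (Ideal.span {fermatVar p 0, fermatVar p 1}).frobPow (p ^ n)) ≠ ⊥ ∧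
    Ideal.span {fermatVar p 0, fermatVar p 1, fermatVar p 2} ^ (2 * p ^ n + 1) ≤
      Ideal.span {fermatVar p 0 ^ p ^ n, fermatVar p 1 ^ p ^ n} ∧
    ¬ Ideal.span {fermatVar p 0, fermatVar p 1, fermatVar p 2} ^ (2 * p ^ n) ≤
      Ideal.span {fermatVar p 0 ^ p ^ n, fermatVar p 1 ^ p ^ n} := by
  intro n
  have hq : 0 < p ^ n := pow_pos (Fact.out : p.Prime).pos n
  have hle := span_triple_pow_le_span_pow_pair (FermatCubic.fermatVar_cube_add p) (p ^ n)
  have hnle : ¬ Ideal.span {fermatVar p 0, fermatVar p 1, fermatVar p 2} ^ (2 * p ^ n) ≤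
      Ideal.span {fermatVar p 0 ^ p ^ n, fermatVar p 1 ^ p ^ n} := fun h =>
    FermatCubic.pow_mul_pow_mul_sq_notMem_span_pow_pair p hq
      (Ideal.span_triple_pow_le_iff.mp h _ _ _ (by omega))
  rw [Ideal.frobPow_span p, Set.image_pair, H0_quotient_eq_top_of_pow_le hle, ne_eq,
    Ideal.smul_top_quotient_eq_bot_iff, Ideal.smul_top_quotient_eq_bot_iff]
  exact ⟨hle, hnle, hle, hnle⟩
end
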